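/- Co-information as the measure of the triple content intersection: for random variables X : Ω → α, Y : Ω → β, Z : Ω → γ, H(X) + H(Y) + H(Z) − H(⟨X,Y⟩) − H(⟨X,Z⟩) − H(⟨Y,Z⟩) + H(⟨X,Y,Z⟩) = Σ_{S ∈ C(X) ∩ C(Y) ∩ C(Z)} L°(S), where ⟨·,·⟩ denotes the joint variable mapping ω to the tuple of values. -/

import Mathlib

open Finset
open scoped Classical

/-- The total loss of a finite family of reals:
`L(p_1, …, p_n) = Σ_i p_i log(1/p_i) − (Σ_i p_i) log(1/Σ_i p_i)`. -/
noncomputable def totalLoss {ι : Type*} (s : Finset ι) (p : ι → ℝ) : ℝ :=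
  ∑ i ∈ s, p i * Real.log (1 / p i) - (∑ i ∈ s, p i) * Real.log (1 / ∑ i ∈ s, p i)

/-- The interior loss, defined by inclusion–exclusion:
`L°(p_1, …, p_n) = Σ_{S ⊆ {1,…,n}} (−1)^{n−|S|} L((p_i)_{i∈S})`. -/
noncomputable def interiorLoss {ι : Type*} [DecidableEq ι] (s : Finset ι) (p : ι → ℝ) : ℝ :=
  ∑ T ∈ s.powerset, (-1 : ℝ) ^ (s.card - T.card) * totalLoss T p

/-- The probability that the random variable `X : Ω → α` takes the value `a`,
with respect to the mass function `P`. -/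
noncomputable def probOf {Ω α : Type*} [Fintype Ω] (P : Ω → ℝ) (X : Ω → α) (a : α) : ℝ :=
  ∑ ω ∈ Finset.univ.filter (fun ω => X ω = a), P ω

/-- The Shannon entropy `H(X) = Σ_{a ∈ X(Ω)} P(X = a) log(1/P(X = a))` of a random
variable `X : Ω → α` with respect to the mass function `P`. -/
noncomputable def entropy {Ω α : Type*} [Fintype Ω] (P : Ω → ℝ) (X : Ω → α) : ℝ :=
  ∑ a ∈ Finset.univ.image X, probOf P X a * Real.log (1 / probOf P X a)

/-- The content `C(X)` of a random variable `X : Ω → α`: the collection of subsets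
`S ⊆ Ω` with `|S| ≥ 2` on which `X` is not constant. -/
noncomputable def content {Ω α : Type*} [Fintype Ω] (X : Ω → α) : Finset (Finset Ω) :=
  Finset.univ.filter (fun S => 2 ≤ S.card ∧ ∃ ω ∈ S, ∃ ω2 ∈ S, X ω ≠ X ω2)

/-!
By Möbius inversion on the subset lattice, the total loss of a family is the sum of the interior
losses of its subfamilies. Since `Σ P = 1`, `H(X) = L(Ω) - Σ_a L(X⁻¹ a)`, so the entropy is the
sum of `L°(S)` over the sets `S` that lie in no single fibre of `X`, i.e. over `C(X)`. The content
of a joint variable is the union of the contents, so the co-information is the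
inclusion–exclusion formula for the sum over `C(X) ∩ C(Y) ∩ C(Z)`.
-/

namespace Finset

variable {ι R : Type*}

theorem sum_Icc_neg_one_pow_card_sub [DecidableEq ι] [CommRing R] {s t : Finset ι} (hst : s ⊆ t) :
    ∑ u ∈ Icc s t, (-1 : R) ^ (#u - #s) = if s = t then 1 else 0 := by
  have hinj : Set.InjOn (s ∪ ·) (t \ s).powerset := fun v hv w hw hvw => by
    have hv' : Disjoint s v := disjoint_of_subset_right (mem_powerset.1 hv) disjoint_sdiff
    have hw' : Disjoint s w := disjoint_of_subset_right (mem_powerset.1 hw) disjoint_sdiff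
    simpa [union_sdiff_cancel_left hv', union_sdiff_cancel_left hw'] using
      congrArg (· \ s) hvw
  rw [Icc_eq_image_powerset hst, sum_image hinj]
  calc ∑ v ∈ (t \ s).powerset, (-1 : R) ^ (#(s ∪ v) - #s)
      = ((∑ v ∈ (t \ s).powerset, (-1 : ℤ) ^ #v : ℤ) : R) := by
        push_cast
        refine sum_congr rfl fun v hv => ?_
        rw [card_union_of_disjoint
          (disjoint_of_subset_right (mem_powerset.1 hv) disjoint_sdiff), Nat.add_sub_cancel_left]
    _ = if s = t then 1 else 0 := by
        have hts : t \ s = ∅ ↔ s = t := sdiff_eq_empty_iff_subset.trans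
          ⟨hst.antisymm, fun h => h ▸ subset_rfl⟩
        rw [sum_powerset_neg_one_pow_card]
        simp only [hts]
        split_ifs <;> simp

theorem sum_powerset_sum_powerset_neg_one_pow [CommRing R] (f : Finset ι → R) (s : Finset ι) :
    ∑ t ∈ s.powerset, ∑ u ∈ t.powerset, (-1 : R) ^ (#t - #u) * f u = f s := by
  classical
  rw [sum_comm' (t' := s.powerset) (s' := fun u => Icc u s) fun t u => by
    simp only [mem_powerset, mem_Icc]
    exact ⟨fun ⟨hts, hut⟩ => ⟨⟨hut, hts⟩, hut.trans hts⟩, fun ⟨⟨hut, hts⟩, _⟩ => ⟨hts, hut⟩⟩]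
  rw [sum_eq_single_of_mem s (mem_powerset_self s) fun u hu hus => ?_]
  · simp
  · rw [← sum_mul, sum_Icc_neg_one_pow_card_sub (mem_powerset.1 hu), if_neg hus, zero_mul]

theorem sum_inter_inter_eq_inclusion_exclusion [AddCommGroup R] {α : Type*} [DecidableEq α]
    (A B C : Finset α) (f : α → R) :
    ∑ x ∈ A, f x + ∑ x ∈ B, f x + ∑ x ∈ C, f x - ∑ x ∈ A ∪ B, f x - ∑ x ∈ A ∪ C, f x
      - ∑ x ∈ B ∪ C, f x + ∑ x ∈ A ∪ B ∪ C, f x = ∑ x ∈ A ∩ B ∩ C, f x := by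
  have hAB := sum_union_inter (s₁ := A) (s₂ := B) (f := f)
  have hABC := sum_union_inter (s₁ := A ∩ B) (s₂ := C) (f := f)
  have hACBC := sum_union_inter (s₁ := A ∪ C) (s₂ := B ∪ C) (f := f)
  rw [← union_union_distrib_right, ← inter_union_distrib_right] at hACBC
  rw [eq_sub_of_add_eq hACBC, eq_sub_of_add_eq hABC, eq_sub_of_add_eq hAB]
  abel

end Finset

section Loss

variable {ι : Type*} [DecidableEq ι]

theorem interiorLoss_empty (p : ι → ℝ) : interiorLoss ∅ p = 0 := by
  simp [interiorLoss, totalLoss]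

theorem sum_powerset_interiorLoss (s : Finset ι) (p : ι → ℝ) :
    ∑ t ∈ s.powerset, interiorLoss t p = totalLoss s p :=
  sum_powerset_sum_powerset_neg_one_pow (fun u => totalLoss u p) s

end Loss

section Content

variable {Ω α β : Type*} [Fintype Ω]

theorem mem_content {X : Ω → α} {S : Finset Ω} :
    S ∈ content X ↔ ∃ ω ∈ S, ∃ ω' ∈ S, X ω ≠ X ω' := by
  refine (mem_filter_univ S).trans ⟨And.right, fun h => ⟨?_, h⟩⟩
  obtain ⟨ω, hω, ω', hω', hne⟩ := h
  exact one_lt_card.2 ⟨ω, hω, ω', hω', fun h => hne (congrArg X h)⟩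

theorem content_prod (X : Ω → α) (Y : Ω → β) :
    content (fun ω => (X ω, Y ω)) = content X ∪ content Y := by
  ext S
  simp only [mem_union, mem_content, ne_eq, Prod.mk.injEq, not_and_or, and_or_left, exists_or]

/-- The subsets of `Ω` outside `C(X)` are `∅` and the nonempty subsets of the fibres of `X`. -/
theorem sum_image_sum_powerset_fiber {R : Type*} [AddCommMonoid R] (X : Ω → α)
    (f : Finset Ω → R) (hf : f ∅ = 0) :
    ∑ a ∈ univ.image X, ∑ T ∈ (univ.filter (X · = a)).powerset, f T =
      ∑ T ∈ univ.filter (· ∉ content X), f T := by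
  have hT (T : Finset Ω) :
      ∑ a ∈ univ.image X, (if T ⊆ univ.filter (X · = a) then f T else 0) =
        if T ∉ content X then f T else 0 := by
    obtain rfl | ⟨ω₀, hω₀⟩ := T.eq_empty_or_nonempty
    · simp [hf]
    have hsub (a : α) : T ⊆ univ.filter (X · = a) ↔ X ω₀ = a ∧ T ∉ content X := by
      simp only [subset_iff, mem_filter_univ, mem_content, not_exists, not_and, not_not]
      exact ⟨fun h => ⟨h hω₀, fun ω hω ω' hω' => (h hω).trans (h hω').symm⟩,
        fun ⟨ha, h⟩ ω hω => (h ω hω ω₀ hω₀).trans ha⟩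
    simp only [hsub, ite_and]
    exact sum_ite_eq _ _ _ |>.trans (if_pos (mem_image_of_mem X (mem_univ ω₀)))
  simp only [← filter_subset_univ, sum_filter]
  rw [sum_comm]
  exact sum_congr rfl fun T _ => hT T

end Content

section Entropy

variable {Ω α : Type*} [Fintype Ω] (P : Ω → ℝ)

theorem entropy_eq_totalLoss_sub_sum_totalLoss_fiber (hsum : ∑ ω, P ω = 1) (X : Ω → α) :
    entropy P X = totalLoss univ P - ∑ a ∈ univ.image X, totalLoss (univ.filter (X · = a)) P := by
  have hfib := sum_fiberwise_of_maps_to (s := univ) (g := X) (t := univ.image X)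
    (fun ω _ => mem_image_of_mem X (mem_univ ω)) (fun ω => P ω * Real.log (1 / P ω))
  simp only [entropy, totalLoss, probOf, hsum, div_one, Real.log_one, mul_zero, sub_zero,
    sum_sub_distrib, hfib]
  ring

theorem entropy_eq_sum_content (hsum : ∑ ω, P ω = 1) (X : Ω → α) :
    entropy P X = ∑ S ∈ content X, interiorLoss S P := by
  simp only [entropy_eq_totalLoss_sub_sum_totalLoss_fiber P hsum, ← sum_powerset_interiorLoss,
    sum_image_sum_powerset_fiber X (interiorLoss · P) (interiorLoss_empty P), powerset_univ]
  rw [← sum_filter_add_sum_filter_not univ (· ∉ content X), filter_not]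
  simp

end Entropy

theorem coInformation_eq_sum_content_inter_general {Ω α β γ : Type*} [Fintype Ω]
    (P : Ω → ℝ) (hsum : ∑ ω, P ω = 1)
    (X : Ω → α) (Y : Ω → β) (Z : Ω → γ) :
    entropy P X + entropy P Y + entropy P Z
      - entropy P (fun ω => (X ω, Y ω)) - entropy P (fun ω => (X ω, Z ω))
      - entropy P (fun ω => (Y ω, Z ω)) + entropy P (fun ω => (X ω, Y ω, Z ω)) =
      ∑ S ∈ content X ∩ content Y ∩ content Z, interiorLoss S P := by
  simp only [entropy_eq_sum_content P hsum, content_prod, ← union_assoc]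
  exact sum_inter_inter_eq_inclusion_exclusion _ _ _ _

/-- co-information as the measure of the triple content intersection.
For `X : Ω → α`, `Y : Ω → β`, `Z : Ω → γ`,
`H(X) + H(Y) + H(Z) − H(⟨X,Y⟩) − H(⟨X,Z⟩) − H(⟨Y,Z⟩) + H(⟨X,Y,Z⟩)
  = Σ_{S ∈ C(X) ∩ C(Y) ∩ C(Z)} L°(S)`. -/
theorem coInformation_eq_sum_content_inter {Ω α β γ : Type*} [Fintype Ω] [Nonempty Ω]
    [Fintype α] [Fintype β] [Fintype γ]
    (P : Ω → ℝ) (hP : ∀ ω, 0 < P ω) (hsum : ∑ ω, P ω = 1)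
    (X : Ω → α) (Y : Ω → β) (Z : Ω → γ) :
    entropy P X + entropy P Y + entropy P Z
      - entropy P (fun ω => (X ω, Y ω)) - entropy P (fun ω => (X ω, Z ω))
      - entropy P (fun ω => (Y ω, Z ω)) + entropy P (fun ω => (X ω, Y ω, Z ω)) =
      ∑ S ∈ content X ∩ content Y ∩ content Z, interiorLoss S P :=
  coInformation_eq_sum_content_inter_general P hsum X Y Z
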